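/- In a conjunctive algebra, if a ∈ 𝒮 and b ∈ 𝒮 then a * b ∈ 𝒮, where a * b := ⋀{c | a ≼ b ⊸ c}. Conversely, in the presence of upward closure, closure of 𝒮 under * implies the modus ponens rule: a ⊸ b ∈ 𝒮 and a ∈ 𝒮 imply b ∈ 𝒮. -/
import Mathlib


/-- A conjunctive structure: a complete lattice with a monotone tensor
distributing over arbitrary joins in each argument and an antitone involutive
orthogonal satisfying De Morgan for joins. -/
structure ConjStruct (C : Type*) [CompleteLattice C] where
  tens : C → C → C
  neg : C → C
  tens_mono : ∀ {a b c d : C}, a ≤ b → c ≤ d → tens a c ≤ tens b d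
  neg_antitone : ∀ {a b : C}, a ≤ b → neg b ≤ neg a
  neg_neg : ∀ a : C, neg (neg a) = a
  tens_sSup_left : ∀ (S : Set C) (a : C), tens (sSup S) a = ⨆ b ∈ S, tens b a
  tens_sSup_right : ∀ (a : C) (S : Set C), tens a (sSup S) = ⨆ b ∈ S, tens a b
  neg_sSup : ∀ S : Set C, neg (sSup S) = ⨅ b ∈ S, neg b

variable {C : Type*} [CompleteLattice C]

/-- Linear implication `a ⊸ b := (a ⊗ b^⊥)^⊥`. -/
def ConjStruct.imp (𝒞 : ConjStruct C) (a b : C) : C := 𝒞.neg (𝒞.tens a (𝒞.neg b))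

/-- Par `a ⅋ b := (a^⊥ ⊗ b^⊥)^⊥`. -/
def ConjStruct.parr (𝒞 : ConjStruct C) (a b : C) : C := 𝒞.neg (𝒞.tens (𝒞.neg a) (𝒞.neg b))

/-- The adjoint application `a * b := ⋀{c | a ≼ b ⊸ c}`. -/
def ConjStruct.app (𝒞 : ConjStruct C) (a b : C) : C := sInf {c | a ≤ 𝒞.imp b c}

lemma ConjStruct.neg_sInf (𝒞 : ConjStruct C) (T : Set C) :
    𝒞.neg (sInf T) = ⨆ c ∈ T, 𝒞.neg c := by
  have h : sInf T = 𝒞.neg (sSup (𝒞.neg '' T)) := by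
    rw [𝒞.neg_sSup, iInf_image]
    simp [𝒞.neg_neg, sInf_eq_iInf]
  rw [h, 𝒞.neg_neg, sSup_image]

lemma ConjStruct.le_imp_app (𝒞 : ConjStruct C) (a b : C) :
    a ≤ 𝒞.imp b (𝒞.app a b) := by
  unfold ConjStruct.imp ConjStruct.app
  rw [𝒞.neg_sInf, ← sSup_image, 𝒞.tens_sSup_right, iSup_image, ← sSup_image,
    𝒞.neg_sSup, iInf_image]
  exact le_iInf₂ fun c hc => hc

lemma ConjStruct.app_imp_le (𝒞 : ConjStruct C) (a b : C) :
    𝒞.app (𝒞.imp a b) a ≤ b :=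
  sInf_le (le_refl _)

/-- In a conjunctive algebra the separator is closed under `*`; conversely, in
the presence of upward closure, closure under `*` implies modus ponens. -/
theorem separator_app_closure (𝒞 : ConjStruct C) (S : Set C)
    (hup : ∀ a b : C, a ≤ b → a ∈ S → b ∈ S) :
    ((∀ a b : C, 𝒞.imp a b ∈ S → a ∈ S → b ∈ S) →
      ∀ a b : C, a ∈ S → b ∈ S → 𝒞.app a b ∈ S) ∧
    ((∀ a b : C, a ∈ S → b ∈ S → 𝒞.app a b ∈ S) →
      ∀ a b : C, 𝒞.imp a b ∈ S → a ∈ S → b ∈ S) := by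
  constructor
  · intro mp a b ha hb
    exact mp b _ (hup _ _ (𝒞.le_imp_app a b) ha) hb
  · intro cl a b hi ha
    exact hup _ _ (𝒞.app_imp_le a b) (cl _ _ hi ha)
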